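/- In a complete graph on an odd number n of vertices with strict preferences, every popular matching is stable. -/

import Mathlib

/-- A roommates instance: a simple graph together with, for each vertex,
a ranking of vertices (lower rank = more preferred), injective on neighbors. -/
structure Roommates (V : Type*) where
  G : SimpleGraph V
  rank : V → V → ℕ
  rank_inj : ∀ u a b, G.Adj u a → G.Adj u b → rank u a = rank u b → a = b

variable {V : Type*}

/-- `M` encodes a matching: `M u = some v` means `u` is matched to `v`. -/
def IsMatching (R : Roommates V) (M : V → Option V) : Prop :=
  ∀ u v, M u = some v → R.G.Adj u v ∧ M v = some u

/-- Vertex `v` prefers matching `M` to matching `M'`. -/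
def Prefers (R : Roommates V) (M M' : V → Option V) (v : V) : Prop :=
  (∃ w, M v = some w ∧ M' v = none) ∨
  (∃ w w', M v = some w ∧ M' v = some w' ∧ R.rank v w < R.rank v w')

/-- `M` is popular: it never loses a head-to-head election. -/
def Popular [Fintype V] (R : Roommates V) (M : V → Option V) : Prop :=
  ∀ M', IsMatching R M' →
    {v | Prefers R M' M v}.ncard ≤ {v | Prefers R M M' v}.ncard

/-- Edge `(u,v)` blocks `M`: each endpoint is unmatched or prefers the other
endpoint to its partner. -/
def Blocks (R : Roommates V) (M : V → Option V) (u v : V) : Prop :=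
  R.G.Adj u v ∧ M u ≠ some v ∧
  (∀ w, M u = some w → R.rank u v < R.rank u w) ∧
  (∀ w, M v = some w → R.rank v u < R.rank v w)

def IsStable (R : Roommates V) (M : V → Option V) : Prop :=
  ∀ u v, ¬ Blocks R M u v

/-- `u` votes `+` for `v` against its situation in `M`
(true when `u` is unmatched or prefers `v` to its `M`-partner). -/
def VotePlus (R : Roommates V) (M : V → Option V) (u v : V) : Prop :=
  ∀ w, M u = some w → R.rank u v < R.rank u w

/-- Non-matching edge of `G_M`, i.e. not labeled `(−,−)`. -/
def NonMatchEdge (R : Roommates V) (M : V → Option V) (u v : V) : Prop :=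
  R.G.Adj u v ∧ M u ≠ some v ∧ (VotePlus R M u v ∨ VotePlus R M v u)

/-- `AltList A M b l`: the list of vertices `l` forms an alternating sequence,
whose first edge is a matching edge if `b = true` and an allowed (`A`)
non-matching edge if `b = false`. -/
def AltList (A : V → V → Prop) (M : V → Option V) : Bool → List V → Prop
  | _, [] => True
  | _, [_] => True
  | true, u :: v :: rest => M u = some v ∧ AltList A M false (v :: rest)
  | false, u :: v :: rest => A u v ∧ AltList A M true (v :: rest)

/-- A matching of the subgraph induced on `W`. -/
def IsMatchingOn (R : Roommates V) (W : Set V) (M : V → Option V) : Prop :=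
  IsMatching R M ∧ ∀ u v, M u = some v → u ∈ W ∧ v ∈ W

/-- Popularity within the subgraph induced on `W`. -/
def PopularOn (R : Roommates V) (W : Set V) (M : V → Option V) : Prop :=
  ∀ M', IsMatchingOn R W M' →
    {v | v ∈ W ∧ Prefers R M' M v}.ncard ≤ {v | v ∈ W ∧ Prefers R M M' v}.ncard

/-- Stability within the subgraph induced on `W`. -/
def StableOn (R : Roommates V) (W : Set V) (M : V → Option V) : Prop :=
  ∀ u v, u ∈ W → v ∈ W → ¬ Blocks R M u v

/-! If `(u, v)` blocks a popular matching `M`, matching `u` with `v` and dropping their old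
partners gains two votes and loses at most one per old partner, so by popularity both `u` and
`v` are matched, say to `a` and `b`. Because the number of vertices is odd, some vertex `w` is unmatched
and, the graph being complete, `a` can be rematched to `w`: along the alternating path
`w, a, u, v, b` the new matching wins at `u`, `v`, `w` and loses at most at `a`, `b`,
contradicting popularity. -/

open Function

theorem Function.Involutive.even_card_of_forall_ne {α : Type*} [Fintype α] {f : α → α}
    (hf : Involutive f) (hne : ∀ x, f x ≠ x) : Even (Fintype.card α) := by
  classical
  have : Fact (Nat.Prime 2) := ⟨Nat.prime_two⟩
  have hmod := Equiv.Perm.card_fixedPoints_modEq (p := 2) (n := 1) (f := (f : Function.End α))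
    (funext hf)
  have hfix : Fintype.card (fixedPoints (f : Function.End α)) = 0 :=
    Fintype.card_eq_zero_iff.mpr ⟨fun x => hne x x.2⟩
  rw [hfix] at hmod
  exact even_iff_two_dvd.mpr (Nat.modEq_zero_iff_dvd.mp hmod)

section Matching

variable {R : Roommates V} {M M' : V → Option V} {u v w x a b : V}

theorem IsMatching.symm (hM : IsMatching R M) (h : M u = some v) : M v = some u :=
  (hM u v h).2

theorem IsMatching.ne (hM : IsMatching R M) (h : M u = some v) : u ≠ v :=
  R.G.ne_of_adj (hM u v h).1

theorem IsMatching.exists_eq_none [Fintype V] (hM : IsMatching R M)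
    (hodd : Odd (Fintype.card V)) : ∃ w, M w = none := by
  by_contra! h
  choose f hf using fun v => Option.ne_none_iff_exists'.mp (h v)
  have hinv : Involutive f := fun v => Option.some_injective _ ((hf _).symm.trans (hM.symm (hf v)))
  exact Nat.not_even_iff_odd.mpr hodd (hinv.even_card_of_forall_ne fun v => (hM.ne (hf v)).symm)

theorem Prefers.not_prefers (h : Prefers R M M' x) : ¬ Prefers R M' M x := by
  rcases h with ⟨w, hM, hM'⟩ | ⟨w, w', hM, hM', hlt⟩
  · rintro (⟨_, h, -⟩ | ⟨_, _, h, -⟩) <;> simp [hM'] at h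
  · rintro (⟨_, -, h⟩ | ⟨_, _, h, h', hlt'⟩)
    · simp [hM] at h
    · cases hM.symm.trans h'
      cases hM'.symm.trans h
      exact lt_asymm hlt hlt'

theorem Prefers.apply_ne (h : Prefers R M M' x) : M x ≠ M' x := by
  rintro heq
  rcases h with ⟨_, h1, h2⟩ | ⟨_, _, h1, h2, hlt⟩
  · simp [heq, h2] at h1
  · cases h1.symm.trans (heq.trans h2)
    exact lt_irrefl _ hlt

open Classical in
noncomputable def addEdge (M : V → Option V) (u v : V) : V → Option V := fun x =>
  if x = u then some v else if x = v then some u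
  else if M x = some u ∨ M x = some v then none else M x

@[simp]
theorem addEdge_apply_left : addEdge M u v u = some v := by
  simp [addEdge]

theorem addEdge_apply_right (huv : u ≠ v) : addEdge M u v v = some u := by
  simp [addEdge, huv.symm]

theorem IsMatching.addEdge_apply_eq_none (hM : IsMatching R M) (hxu : x ≠ u) (hxv : x ≠ v)
    (h : M u = some x) : addEdge M u v x = none := by
  simp [addEdge, hxu, hxv, hM.symm h]

theorem IsMatching.addEdge_apply (hM : IsMatching R M) (hxu : x ≠ u) (hxv : x ≠ v)
    (hu : M u ≠ some x) (hv : M v ≠ some x) : addEdge M u v x = M x := by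
  have hu' : M x ≠ some u := fun h => hu (hM.symm h)
  have hv' : M x ≠ some v := fun h => hv (hM.symm h)
  simp [addEdge, hxu, hxv, hu', hv']

theorem IsMatching.eq_or_of_addEdge_apply_ne (hM : IsMatching R M)
    (h : addEdge M u v x ≠ M x) : x = u ∨ x = v ∨ M u = some x ∨ M v = some x := by
  by_contra! hx
  exact h (hM.addEdge_apply hx.1 hx.2.1 hx.2.2.1 hx.2.2.2)

theorem IsMatching.addEdge (hM : IsMatching R M) (huv : R.G.Adj u v) :
    IsMatching R (addEdge M u v) := by
  intro x y hxy
  by_cases hxu : x = u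
  · subst hxu
    simp only [addEdge_apply_left, Option.some.injEq] at hxy
    exact hxy ▸ ⟨huv, addEdge_apply_right huv.ne⟩
  by_cases hxv : x = v
  · subst hxv
    rw [addEdge_apply_right huv.ne, Option.some.injEq] at hxy
    exact hxy ▸ ⟨huv.symm, addEdge_apply_left⟩
  simp only [_root_.addEdge, hxu, hxv, if_false] at hxy
  split_ifs at hxy with hx
  rw [not_or] at hx
  have hyx := hM.symm hxy
  refine ⟨(hM x y hxy).1, ?_⟩
  rw [hM.addEdge_apply (by rintro rfl; exact hx.1 hxy) (by rintro rfl; exact hx.2 hxy) ?_ ?_, hyx]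
  · exact fun h => hxu (Option.some_injective _ ((hM.symm h).symm.trans hyx)).symm
  · exact fun h => hxv (Option.some_injective _ ((hM.symm h).symm.trans hyx)).symm

theorem Blocks.symm (hM : IsMatching R M) (h : Blocks R M u v) : Blocks R M v u :=
  ⟨h.1.symm, fun hv => h.2.1 (hM.symm hv), h.2.2.2, h.2.2.1⟩

theorem Blocks.prefers (h : Blocks R M u v) (hM' : M' u = some v) : Prefers R M' M u := by
  cases hu : M u with
  | none => exact Or.inl ⟨v, hM', hu⟩
  | some a => exact Or.inr ⟨v, a, hM', hu, h.2.2.1 a hu⟩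

end Matching

section Popular

variable [Fintype V] {R : Roommates V} {M M' : V → Option V} {u v w a b : V}

theorem Popular.ncard_le (hpop : Popular R M) (hM' : IsMatching R M') {P Q : Set V}
    (hP : ∀ x ∈ P, Prefers R M' M x) (hQ : ∀ x, M' x ≠ M x → x ∈ P ∨ x ∈ Q) :
    P.ncard ≤ Q.ncard := by
  have hlost : {x | Prefers R M M' x} ⊆ Q := by
    intro x hx
    exact (hQ x hx.apply_ne.symm).resolve_left fun hxP => (hP x hxP).not_prefers hx
  calc P.ncard ≤ {x | Prefers R M' M x}.ncard := Set.ncard_le_ncard hP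
    _ ≤ {x | Prefers R M M' x}.ncard := hpop M' hM'
    _ ≤ Q.ncard := Set.ncard_le_ncard hlost

theorem Popular.not_blocks_of_eq_none (hM : IsMatching R M) (hpop : Popular R M)
    (hb : Blocks R M u v) (hu : M u = none) : False := by
  have huv : u ≠ v := hb.1.ne
  have hle := hpop.ncard_le (hM.addEdge hb.1) (P := {u, v}) (Q := {x | M v = some x})
    (by
      rintro x (rfl | rfl)
      · exact hb.prefers addEdge_apply_left
      · exact (hb.symm hM).prefers (addEdge_apply_right huv))
    (fun x hx => by
      rcases hM.eq_or_of_addEdge_apply_ne hx with rfl | rfl | hux | hvx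
      · simp
      · simp
      · simp [hu] at hux
      · exact Or.inr hvx)
  have hQ : {x | M v = some x}.ncard ≤ 1 :=
    Set.ncard_le_one_iff_subsingleton.2 fun a ha b hb => Option.some_injective _ (ha.symm.trans hb)
  rw [Set.ncard_pair huv] at hle
  omega

theorem Popular.not_blocks_of_eq_some (hcomplete : R.G = ⊤) (hM : IsMatching R M)
    (hpop : Popular R M) (hb : Blocks R M u v) (hua : M u = some a) (hvb : M v = some b)
    (hw : M w = none) : False := by
  have huv : u ≠ v := hb.1.ne
  have hau : a ≠ u := (hM.ne hua).symm
  have hav : a ≠ v := fun h => hb.2.1 (h ▸ hua)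
  have hwu : w ≠ u := by rintro rfl; simp [hw] at hua
  have hwv : w ≠ v := by rintro rfl; simp [hw] at hvb
  have hwa : w ≠ a := by rintro rfl; simpa [hw] using hM.symm hua
  have hwb : w ≠ b := by rintro rfl; simpa [hw] using hM.symm hvb
  have hM₁ := hM.addEdge hb.1
  have hM₁a : addEdge M u v a = none := hM.addEdge_apply_eq_none hau hav hua
  have hM₁w : addEdge M u v w = none :=
    (hM.addEdge_apply hwu hwv (by simp [hua, hwa.symm]) (by simp [hvb, hwb.symm])).trans hw
  -- the alternating path `w, a, u, v, b`
  set M₂ := addEdge (addEdge M u v) a w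
  have hM₂ : IsMatching R M₂ := hM₁.addEdge (by simpa [hcomplete] using hwa.symm)
  have hM₂_of_ne {x} (hxa : x ≠ a) (hxw : x ≠ w) : M₂ x = addEdge M u v x :=
    hM₁.addEdge_apply hxa hxw (by simp [hM₁a]) (by simp [hM₁w])
  have hle := hpop.ncard_le hM₂ (P := {u, v, w}) (Q := {a, b})
    (by
      rintro x (rfl | rfl | rfl)
      · exact hb.prefers ((hM₂_of_ne hau.symm hwu.symm).trans addEdge_apply_left)
      · exact (hb.symm hM).prefers
          ((hM₂_of_ne hav.symm hwv.symm).trans (addEdge_apply_right huv))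
      · exact Or.inl ⟨a, addEdge_apply_right hwa.symm, hw⟩)
    (fun x hx => by
      rcases eq_or_ne (M₂ x) (addEdge M u v x) with h | h
      · rcases hM.eq_or_of_addEdge_apply_ne (h ▸ hx) with rfl | rfl | h | h <;> simp_all
      · rcases hM₁.eq_or_of_addEdge_apply_ne h with rfl | rfl | h | h <;> simp_all)
  have hP : ({u, v, w} : Set V).ncard = 3 := by
    rw [Set.ncard_insert_of_notMem (by simp [huv, hwu.symm]), Set.ncard_pair hwv.symm]
  have hQ : ({a, b} : Set V).ncard ≤ 2 := (Set.ncard_insert_le _ _).trans (by simp)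
  omega

end Popular

/-- in a complete graph on an odd number of vertices with strict
preferences, every popular matching is stable. -/
theorem popular_is_stable_complete_odd {V : Type*} [Fintype V] (R : Roommates V)
    (hcomplete : R.G = ⊤) (hodd : Odd (Fintype.card V))
    (M : V → Option V) (hM : IsMatching R M) (hpop : Popular R M) :
    IsStable R M := by
  intro u v hb
  obtain ⟨w, hw⟩ := hM.exists_eq_none hodd
  cases hu : M u with
  | none => exact hpop.not_blocks_of_eq_none hM hb hu
  | some a =>
    cases hv : M v with
    | none => exact hpop.not_blocks_of_eq_none hM (hb.symm hM) hv
    | some b => exact hpop.not_blocks_of_eq_some hcomplete hM hb hu hv hw
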